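/- Let M ⊆ H²(𝔻, ℂ^m) be a closed subspace, E_1 ∈ H²(𝔻, ℂ^m) a unit vector orthogonal to M, W = M ⊖ (M ∩ zH²(𝔻, ℂ^m)) with orthonormal basis {W_1, …, W_r}, and F_0 the m×r matrix-valued function with columns W_1, …, W_r. Suppose M = {F : F = F_0 K_0 + z k_1 E_1 for some (K_0, k_1) ∈ K}, where K ⊆ H²(𝔻, ℂ^r) × H²(𝔻) ≅ H²(𝔻, ℂ^{r+1}) is a closed subspace invariant under the componentwise backward shift S* ⊕ S*, and every F in M has the unique such representation with ‖F‖² = ‖K_0‖² + ‖k_1‖². Then M is nearly S*-invariant with defect 1 and defect space span{E_1}: if F ∈ M and F(0) = 0 then S*F ∈ M ⊕ span{E_1}. -/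

import Mathlib

noncomputable section

open scoped ENNReal ComplexConjugate
open ContinuousLinearMap

abbrev Cm (m : ℕ) := EuclideanSpace ℂ (Fin m)
abbrev H2 (m : ℕ) := lp (fun _ : ℕ => Cm m) 2

namespace Hardy

variable {m r : ℕ}

lemma two_toReal : (2 : ℝ≥0∞).toReal = 2 := by norm_num

def shiftFun (f : ℕ → Cm m) : ℕ → Cm m := fun n => match n with
  | 0 => 0
  | k + 1 => f k

lemma shift_memℓp (f : H2 m) : Memℓp (shiftFun (f : ∀ _, Cm m)) 2 := by
  rw [memℓp_gen_iff (by norm_num)]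
  have hs : Summable fun n : ℕ => ‖(f : ∀ _, Cm m) n‖ ^ (2 : ℝ≥0∞).toReal :=
    (lp.memℓp f).summable (by norm_num)
  have : Summable fun n : ℕ =>
      ‖shiftFun (f : ∀ _, Cm m) (n + 1)‖ ^ (2 : ℝ≥0∞).toReal := hs
  exact (summable_nat_add_iff 1).mp this

/-- The forward shift `S` on the vector-valued Hardy space (Taylor-coefficient model). -/
def S (m : ℕ) : H2 m →L[ℂ] H2 m :=
  LinearMap.mkContinuous
    { toFun := fun f => ⟨shiftFun (f : ∀ _, Cm m), shift_memℓp f⟩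
      map_add' := by
        intro f g
        apply Subtype.ext
        have key : shiftFun (↑(f + g) : ∀ _, Cm m)
            = shiftFun (f : ∀ _, Cm m) + shiftFun (g : ∀ _, Cm m) := by
          funext n
          have h : (shiftFun (f : ∀ _, Cm m) + shiftFun (g : ∀ _, Cm m)) n
              = shiftFun (f : ∀ _, Cm m) n + shiftFun (g : ∀ _, Cm m) n := rfl
          rw [h, lp.coeFn_add]
          cases n with
          | zero => simp [shiftFun]
          | succ k => simp [shiftFun]
        exact key
      map_smul' := by
        intro c f
        apply Subtype.ext
        have key : shiftFun (↑(c • f) : ∀ _, Cm m)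
            = c • shiftFun (f : ∀ _, Cm m) := by
          funext n
          have h : (c • shiftFun (f : ∀ _, Cm m)) n
              = c • shiftFun (f : ∀ _, Cm m) n := rfl
          rw [h, lp.coeFn_smul]
          cases n with
          | zero => simp [shiftFun]
          | succ k => simp [shiftFun]
        exact key }
    1
    (by
      intro f
      simp only [one_mul]
      apply le_of_eq
      have h2 : (0:ℝ) < (2 : ℝ≥0∞).toReal := by norm_num
      rw [lp.norm_eq_tsum_rpow h2, lp.norm_eq_tsum_rpow h2]
      congr 1
      have hsum : Summable fun n : ℕ =>
          ‖shiftFun (f : ∀ _, Cm m) n‖ ^ (2 : ℝ≥0∞).toReal := by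
        rw [← memℓp_gen_iff (by norm_num)]; exact shift_memℓp f
      have key : ∑' n : ℕ, ‖shiftFun (f : ∀ _, Cm m) n‖ ^ (2 : ℝ≥0∞).toReal
          = ∑' n : ℕ, ‖(f : ∀ _, Cm m) n‖ ^ (2 : ℝ≥0∞).toReal := by
        rw [hsum.tsum_eq_zero_add]
        simp [shiftFun]
      exact key)

/-- The backward shift `S*` (the adjoint of the forward shift). -/
def Sadj (m : ℕ) : H2 m →L[ℂ] H2 m := ContinuousLinearMap.adjoint (S m)

/-- `T` is a multiplier (multiplication by an operator-valued analytic function),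
characterized by intertwining the shifts. -/
def IsMultiplier (T : H2 r →L[ℂ] H2 m) : Prop := S m ∘L T = T ∘L S r

/-- `T` is (the multiplication operator of) an inner multiplier: an isometric multiplier. -/
def IsInnerMultiplier (T : H2 r →L[ℂ] H2 m) : Prop :=
  (∀ f, ‖T f‖ = ‖f‖) ∧ IsMultiplier T

/-- The model space `K_Θ = H² ⊖ Θ H²`. -/
def modelSpace (T : H2 r →L[ℂ] H2 m) : Submodule ℂ (H2 m) := (LinearMap.range T.toLinearMap)ᗮ

/-- The constant function with value `v` (Taylor coefficients `(v,0,0,…)`). -/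
def const (v : Cm m) : H2 m := lp.single 2 0 v

/-- The constant function `eᵢ`. -/
def e (m : ℕ) (i : Fin m) : H2 m := const (EuclideanSpace.single i 1)

lemma coord_norm_le (x : Cm m) (i : Fin m) : ‖x i‖ ≤ ‖x‖ := by
  rw [EuclideanSpace.norm_eq]
  have h1 : ‖x i‖ = Real.sqrt (‖x i‖ ^ 2) := by
    rw [Real.sqrt_sq (norm_nonneg _)]
  rw [h1]
  apply Real.sqrt_le_sqrt
  exact Finset.single_le_sum (f := fun j => ‖x j‖ ^ 2)
    (fun j _ => by positivity) (Finset.mem_univ i)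

lemma coord_memℓp (i : Fin m) (f : H2 m) :
    Memℓp (fun n => EuclideanSpace.single (0 : Fin 1) ((f : ∀ _, Cm m) n i)) 2 := by
  rw [memℓp_gen_iff (by norm_num)]
  have hs : Summable fun n : ℕ => ‖(f : ∀ _, Cm m) n‖ ^ (2 : ℝ≥0∞).toReal :=
    (lp.memℓp f).summable (by norm_num)
  apply Summable.of_nonneg_of_le (fun n => by positivity) _ hs
  intro n
  have : ‖EuclideanSpace.single (0 : Fin 1) ((f : ∀ _, Cm m) n i)‖
      = ‖(f : ∀ _, Cm m) n i‖ := by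
    simp [EuclideanSpace.norm_single]
  rw [this]
  have h := coord_norm_le ((f : ∀ _, Cm m) n) i
  exact Real.rpow_le_rpow (norm_nonneg _) h (by norm_num)

/-- The `i`-th coordinate (column) of a `ℂᵐ`-valued Hardy space function, as a scalar
Hardy space function. -/
def coord (i : Fin m) (f : H2 m) : H2 1 :=
  ⟨fun n => EuclideanSpace.single (0 : Fin 1) ((f : ∀ _, Cm m) n i), coord_memℓp i f⟩

/-- A multiplier on `H²(𝔻, ℂᵐ)` is diagonal, `Ψ = diag(ψ₁, …, ψ_m)`, with scalar
multipliers `ψᵢ` represented by the operators `t i`. -/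
def IsDiagonal (T : H2 m →L[ℂ] H2 m) (t : Fin m → (H2 1 →L[ℂ] H2 1)) : Prop :=
  ∀ (f : H2 m) (i : Fin m), coord i (T f) = t i (coord i f)

/-- The analytic function on the disc associated to a scalar Hardy space element. -/
def toFun (f : H2 1) (z : ℂ) : ℂ := ∑' n : ℕ, ((f : ∀ _, Cm 1) n 0) * z ^ n

/-- `F` is a finite Blaschke product on the unit disc. -/
def IsFiniteBlaschke (F : ℂ → ℂ) : Prop :=
  ∃ (k : ℕ) (c : ℂ) (a : Fin k → ℂ), ‖c‖ = 1 ∧ (∀ i, ‖a i‖ < 1) ∧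
    ∀ z ∈ Metric.ball (0 : ℂ) 1,
      F z = c * ∏ i, (z - a i) / (1 - (starRingEnd ℂ) (a i) * z)

/-- `W = M ⊖ (M ∩ zH²)`. -/
def Wspace (M : Submodule ℂ (H2 m)) : Submodule ℂ (H2 m) :=
  M ⊓ (M ⊓ LinearMap.range (S m).toLinearMap)ᗮ

end Hardy

/-!
Write `F = F₀K₀ + z k₁E₁` with `(K₀, k₁) ∈ K`. The function `F₀K₀(0)` (the constant `K₀(0)`
multiplied by `F₀`) lies in `W`, and its value at `0` is `F(0) = 0`, so it also lies in
`M ∩ zH²`, which is orthogonal to `W`; hence it vanishes and `F₀K₀ = z F₀ (S*K₀)`. Therefore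
`S*F = (F₀ (S*K₀) + z (S*k₁) E₁) + k₁(0) E₁`, and the bracket is the element of `M`
represented by `(S*K₀, S*k₁)`, which lies in `K` by its `S* ⊕ S*`-invariance.
-/

namespace Hardy

variable {m r : ℕ}

@[simp] lemma S_apply_zero (f : H2 m) : (S m f : ∀ _, Cm m) 0 = 0 := rfl

@[simp] lemma S_apply_succ (f : H2 m) (n : ℕ) : (S m f : ∀ _, Cm m) (n + 1) = f n := rfl

lemma inner_S_S (f g : H2 m) : inner ℂ (S m f) (S m g) = inner ℂ f g := by
  have hs : Summable fun n => inner ℂ ((S m f) n) ((S m g) n) := lp.summable_inner _ _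
  rw [lp.inner_eq_tsum, lp.inner_eq_tsum, hs.tsum_eq_zero_add]
  simp only [S_apply_zero, S_apply_succ, inner_zero_left, zero_add]

lemma Sadj_S (f : H2 m) : Sadj m (S m f) = f :=
  ext_inner_left ℂ fun g => by rw [Sadj, adjoint_inner_right, inner_S_S]

@[simp] lemma const_apply_zero (v : Cm m) : (const v : ∀ _, Cm m) 0 = v := by
  rw [const]; exact lp.single_apply_self _ _ _

@[simp] lemma const_apply_succ (v : Cm m) (n : ℕ) : (const v : ∀ _, Cm m) (n + 1) = 0 := by
  rw [const]; exact lp.single_apply_ne _ _ _ n.succ_ne_zero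

@[simp] lemma const_zero : const (0 : Cm m) = 0 := by
  rw [const]; exact lp.single_zero _ _

lemma inner_S_const (f : H2 m) (v : Cm m) : inner ℂ (S m f) (const v) = 0 := by
  rw [lp.inner_eq_tsum]
  convert tsum_zero with (_ | n) <;> simp

lemma Sadj_const (v : Cm m) : Sadj m (const v) = 0 :=
  ext_inner_left ℂ fun g => by rw [Sadj, adjoint_inner_right, inner_S_const, inner_zero_right]

lemma tail_memℓp (f : H2 m) : Memℓp (fun n => (f : ∀ _, Cm m) (n + 1)) 2 := by
  rw [memℓp_gen_iff (by norm_num)]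
  exact (summable_nat_add_iff 1).mpr ((lp.memℓp f).summable (by norm_num))

def tail (f : H2 m) : H2 m := ⟨fun n => (f : ∀ _, Cm m) (n + 1), tail_memℓp f⟩

lemma S_tail_add_const (f : H2 m) : S m (tail f) + const ((f : ∀ _, Cm m) 0) = f := by
  ext (_ | n) : 2 <;> simp [tail]

lemma Sadj_eq_tail (f : H2 m) : Sadj m f = tail f := by
  conv_lhs => rw [← S_tail_add_const f]
  rw [map_add, Sadj_S, Sadj_const, add_zero]

lemma S_Sadj_add_const (f : H2 m) : S m (Sadj m f) + const ((f : ∀ _, Cm m) 0) = f := by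
  rw [Sadj_eq_tail, S_tail_add_const]

lemma const_eq_sum (v : Cm m) : const v = ∑ i, v i • e m i := by
  conv_lhs => rw [← (EuclideanSpace.basisFun (Fin m) ℂ).sum_repr v]
  simp only [EuclideanSpace.basisFun_apply, EuclideanSpace.basisFun_repr, const, e,
    ← lp.lsingle_apply (𝕜 := ℂ), map_sum, map_smul]

lemma apply_const_mem {N : Submodule ℂ (H2 m)} {T : H2 r →L[ℂ] H2 m}
    (hT : ∀ i, T (e r i) ∈ N) (v : Cm r) : T (const v) ∈ N := by
  rw [const_eq_sum, map_sum]
  exact N.sum_mem fun i _ => by rw [map_smul]; exact N.smul_mem _ (hT i)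

lemma eq_zero_of_mem_Wspace {M : Submodule ℂ (H2 m)} {w : H2 m} (hw : w ∈ Wspace M)
    (h0 : (w : ∀ _, Cm m) 0 = 0) : w = 0 := by
  have hS : w ∈ LinearMap.range (S m).toLinearMap :=
    ⟨Sadj m w, by simpa [h0] using S_Sadj_add_const w⟩
  exact inner_self_eq_zero.mp (hw.2 w ⟨hw.1, hS⟩)

namespace IsMultiplier

variable {T : H2 r →L[ℂ] H2 m}

lemma apply_S (hT : IsMultiplier T) (g : H2 r) : T (S r g) = S m (T g) :=
  congr($hT.symm g)

lemma S_Sadj_add_const (hT : IsMultiplier T) (g : H2 r) :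
    S m (T (Sadj r g)) + T (const ((g : ∀ _, Cm r) 0)) = T g := by
  rw [← hT.apply_S, ← map_add, Hardy.S_Sadj_add_const]

lemma apply_const_apply_zero (hT : IsMultiplier T) (g : H2 r) :
    (T (const ((g : ∀ _, Cm r) 0)) : ∀ _, Cm m) 0 = (T g : ∀ _, Cm m) 0 := by
  conv_rhs => rw [← hT.S_Sadj_add_const g]
  simp

end IsMultiplier

end Hardy

open Hardy in
theorem stmt_14_general (m r : ℕ) (M : Submodule ℂ (H2 m))
    (TF0 : H2 r →L[ℂ] H2 m) (hF0mul : IsMultiplier TF0)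
    (hWmem : ∀ i : Fin r, TF0 (e r i) ∈ Wspace M)
    (TE1 : H2 1 →L[ℂ] H2 m) (hE1mul : IsMultiplier TE1)
    (E1 : H2 m) (hE1 : TE1 (e 1 0) = E1)
    (K : Submodule ℂ (H2 r × H2 1))
    (hKinv : ∀ p ∈ K, (Sadj r p.1, Sadj 1 p.2) ∈ K)
    (hrep : ∀ F : H2 m, F ∈ M ↔ ∃ p ∈ K, F = TF0 p.1 + S m (TE1 p.2)) :
    ∀ F ∈ M, (F : ∀ _ : ℕ, Cm m) 0 = 0 →
      Sadj m F ∈ M ⊔ Submodule.span ℂ ({E1} : Set (H2 m)) := by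
  intro F hF hF0
  obtain ⟨⟨K0, k1⟩, hK, rfl⟩ := (hrep F).mp hF
  have hK0 : TF0 (const ((K0 : ∀ _, Cm r) 0)) = 0 := by
    refine eq_zero_of_mem_Wspace (apply_const_mem hWmem _) ?_
    simpa [hF0mul.apply_const_apply_zero] using hF0
  have hk1 : TE1 (const ((k1 : ∀ _, Cm 1) 0)) = (k1 : ∀ _, Cm 1) 0 0 • E1 := by
    rw [const_eq_sum, Fin.sum_univ_one, map_smul, hE1]
  have hSF : Sadj m (TF0 K0 + S m (TE1 k1))
      = (TF0 (Sadj r K0) + S m (TE1 (Sadj 1 k1))) + (k1 : ∀ _, Cm 1) 0 0 • E1 := by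
    rw [← hF0mul.S_Sadj_add_const K0, ← hE1mul.S_Sadj_add_const k1, hK0, hk1, add_zero,
      ← map_add, Sadj_S, add_assoc]
  rw [hSF]
  exact Submodule.add_mem _ (Submodule.mem_sup_left ((hrep _).mpr ⟨_, hKinv _ hK, rfl⟩))
    (Submodule.mem_sup_right (Submodule.smul_mem _ _ (Submodule.mem_span_singleton_self E1)))

open Hardy in
/-- If every `F ∈ M` has a unique norm-additive representation `F = F₀K₀ + z k₁ E₁` with
`(K₀, k₁)` in a closed `S* ⊕ S*`-invariant subspace `K ⊆ H²(ℂ^r) × H²(𝔻)`, where the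
columns `Wᵢ = F₀ eᵢ` form an orthonormal basis of `W = M ⊖ (M ∩ zH²)` and `E₁ ⟂ M` is a
unit vector, then `M` is nearly `S*`-invariant with defect space `span{E₁}`. -/
theorem stmt_14 (m r : ℕ) (M : Submodule ℂ (H2 m)) (hclosed : IsClosed (M : Set (H2 m)))
    (TF0 : H2 r →L[ℂ] H2 m) (hF0mul : IsMultiplier TF0)
    (hWmem : ∀ i : Fin r, TF0 (e r i) ∈ Wspace M)
    (hWON : Orthonormal ℂ (fun i : Fin r => TF0 (e r i)))
    (hWspan : Submodule.span ℂ (Set.range fun i : Fin r => TF0 (e r i)) = Wspace M)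
    (TE1 : H2 1 →L[ℂ] H2 m) (hE1mul : IsMultiplier TE1)
    (E1 : H2 m) (hE1 : TE1 (e 1 0) = E1) (hE1norm : ‖E1‖ = 1)
    (hE1orth : ∀ F ∈ M, (inner ℂ E1 F : ℂ) = 0)
    (K : Submodule ℂ (H2 r × H2 1)) (hK : IsClosed (K : Set (H2 r × H2 1)))
    (hKinv : ∀ p ∈ K, (Sadj r p.1, Sadj 1 p.2) ∈ K)
    (hrep : ∀ F : H2 m, F ∈ M ↔ ∃ p ∈ K, F = TF0 p.1 + S m (TE1 p.2))
    (hnormid : ∀ p ∈ K, ‖TF0 p.1 + S m (TE1 p.2)‖ ^ 2 = ‖p.1‖ ^ 2 + ‖p.2‖ ^ 2)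
    (huniq : ∀ p ∈ K, ∀ q ∈ K,
      TF0 p.1 + S m (TE1 p.2) = TF0 q.1 + S m (TE1 q.2) → p = q) :
    ∀ F ∈ M, (F : ∀ _ : ℕ, Cm m) 0 = 0 →
      Sadj m F ∈ M ⊔ Submodule.span ℂ ({E1} : Set (H2 m)) :=
  stmt_14_general m r M TF0 hF0mul hWmem TE1 hE1mul E1 hE1 K hKinv hrep
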